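/- Let D be a triangulated category with shift functor Σ and let (U,V) be a bounded co-t-structure on D. Then M := U ∩ V is a silting subcategory of D, and moreover U = M^∨ and V = M^∧. -/

import Mathlib

open CategoryTheory Limits Pretriangulated

universe v u

variable {C : Type u} [Category.{v} C] [Preadditive C] [HasZeroObject C]
  [HasShift C ℤ] [∀ n : ℤ, (CategoryTheory.shiftFunctor C n).Additive] [Pretriangulated C]

/-- `A` and `B` form a biproduct decomposition of `E`. -/
def IsBiprodDecomp (A B E : C) : Prop :=
  ∃ (i : A ⟶ E) (j : B ⟶ E) (p : E ⟶ A) (q : E ⟶ B),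
    i ≫ p = 𝟙 A ∧ j ≫ q = 𝟙 B ∧ i ≫ q = 0 ∧ j ≫ p = 0 ∧ p ≫ i + q ≫ j = 𝟙 E

/-- `A` is a direct summand of `E`. -/
def IsDirectSummand (A E : C) : Prop := ∃ B, IsBiprodDecomp A B E

/-- A class of objects is closed under direct summands. -/
def SummandClosed (X : Set C) : Prop := ∀ ⦃A E : C⦄, E ∈ X → IsDirectSummand A E → A ∈ X

/-- The essential image of a class of objects under the shift by `n`. -/
def shiftSet (n : ℤ) (X : Set C) : Set C := {A | ∃ B ∈ X, Nonempty (A ≅ B⟦n⟧)}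

/-- The class `X ∗ Y` of objects `E` admitting a distinguished triangle
`A ⟶ E ⟶ B ⟶ ΣA` with `A ∈ X` and `B ∈ Y`. -/
def starSet (X Y : Set C) : Set C :=
  {E | ∃ (A B : C) (_ : A ∈ X) (_ : B ∈ Y) (f : A ⟶ E) (g : E ⟶ B) (h : B ⟶ A⟦(1 : ℤ)⟧),
    Triangle.mk f g h ∈ distTriang C}

/-- A co-t-structure on a triangulated category. -/
structure IsCoTStructure (U V : Set C) : Prop where
  summand_U : SummandClosed U
  summand_V : SummandClosed V
  hom_zero : ∀ ⦃A B : C⦄, A ∈ U → B ∈ V → ∀ f : A ⟶ B⟦(1 : ℤ)⟧, f = 0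
  cover : ∀ E : C, E ∈ starSet (shiftSet (-1) U) V
  shift_le : shiftSet (-1) U ⊆ U

/-- A cotorsion pair in a triangulated category. -/
structure IsCotorsionPair (X Y : Set C) : Prop where
  summand_X : SummandClosed X
  summand_Y : SummandClosed Y
  hom_zero : ∀ ⦃A B : C⦄, A ∈ X → B ∈ Y → ∀ f : A ⟶ B⟦(1 : ℤ)⟧, f = 0
  cover₁ : ∀ E : C, E ∈ starSet X (shiftSet 1 Y)
  cover₂ : ∀ E : C, E ∈ starSet (shiftSet (-1) X) Y

/-- `A` is a direct summand of `E` inside the full additive subcategory `H`. -/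
def IsDirectSummandIn (H : Set C) (A E : C) : Prop :=
  A ∈ H ∧ ∃ B ∈ H, IsBiprodDecomp A B E

/-- A cotorsion pair in an extension-closed subcategory `H` of a triangulated category. -/
structure IsCotorsionPairIn (H A B : Set C) : Prop where
  subset_A : A ⊆ H
  subset_B : B ⊆ H
  summand_A : ∀ ⦃X E : C⦄, E ∈ A → IsDirectSummandIn H X E → X ∈ A
  summand_B : ∀ ⦃X E : C⦄, E ∈ B → IsDirectSummandIn H X E → X ∈ B
  hom_zero : ∀ ⦃X Y : C⦄, X ∈ A → Y ∈ B → ∀ f : X ⟶ Y⟦(1 : ℤ)⟧, f = 0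
  tri₁ : ∀ ⦃M : C⦄, M ∈ H → ∃ (X Y : C) (_ : X ∈ A) (_ : Y ∈ B)
    (f : Y ⟶ X) (g : X ⟶ M) (h : M ⟶ Y⟦(1 : ℤ)⟧), Triangle.mk f g h ∈ distTriang C
  tri₂ : ∀ ⦃M : C⦄, M ∈ H → ∃ (X Y : C) (_ : X ∈ A) (_ : Y ∈ B)
    (f : M ⟶ Y) (g : Y ⟶ X) (h : X ⟶ M⟦(1 : ℤ)⟧), Triangle.mk f g h ∈ distTriang C

/-- The closure of a class of objects under finite direct sums and direct summands. -/
inductive addClosure (X : Set C) : C → Prop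
  | of {A : C} : A ∈ X → addClosure X A
  | sum {A B E : C} : addClosure X A → addClosure X B → IsBiprodDecomp A B E → addClosure X E
  | summand {A E : C} : addClosure X E → IsDirectSummand A E → addClosure X A

/-- `hatN M n` is `M ∗ ΣM ∗ ⋯ ∗ ΣⁿM`. -/
def hatN (M : Set C) : ℕ → Set C
  | 0 => M
  | n + 1 => starSet (hatN M n) (shiftSet ((n : ℤ) + 1) M)

/-- `M^∧ = ⋃_{n ≥ 0} M ∗ ΣM ∗ ⋯ ∗ ΣⁿM`. -/
def hatSet (M : Set C) : Set C := ⋃ n : ℕ, hatN M n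

/-- `veeN M n` is `Σ⁻ⁿM ∗ ⋯ ∗ Σ⁻¹M ∗ M`. -/
def veeN (M : Set C) : ℕ → Set C
  | 0 => M
  | n + 1 => starSet (shiftSet (-((n : ℤ) + 1)) M) (veeN M n)

/-- `M^∨ = ⋃_{n ≥ 0} Σ⁻ⁿM ∗ ⋯ ∗ Σ⁻¹M ∗ M`. -/
def veeSet (M : Set C) : Set C := ⋃ n : ℕ, veeN M n

/-- `bandN M m n` is `Σ⁻ᵐM ∗ ⋯ ∗ M ∗ ΣM ∗ ⋯ ∗ ΣⁿM`. -/
def bandN (M : Set C) : ℕ → ℕ → Set C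
  | 0, n => hatN M n
  | m + 1, n => starSet (shiftSet (-((m : ℤ) + 1)) M) (bandN M m n)

/-- A class of objects is closed under extensions. -/
def ExtClosed (S : Set C) : Prop := ∀ ⦃T : Triangle C⦄, T ∈ (distTriang C) →
  T.obj₁ ∈ S → T.obj₃ ∈ S → T.obj₂ ∈ S

/-- A class of objects is closed under cones. -/
def ConesClosed (S : Set C) : Prop := ∀ ⦃T : Triangle C⦄, T ∈ (distTriang C) →
  T.obj₁ ∈ S → T.obj₂ ∈ S → T.obj₃ ∈ S

/-- A class of objects is closed under cocones. -/
def CoconesClosed (S : Set C) : Prop := ∀ ⦃T : Triangle C⦄, T ∈ (distTriang C) →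
  T.obj₂ ∈ S → T.obj₃ ∈ S → T.obj₁ ∈ S

/-- The thick closure of a class of objects: the smallest class containing it which is
closed under extensions, cones, cocones and direct summands. -/
inductive thickClosure (X : Set C) : C → Prop
  | of {A : C} : A ∈ X → thickClosure X A
  | ext {T : Triangle C} : T ∈ (distTriang C) → thickClosure X T.obj₁ → thickClosure X T.obj₃ →
      thickClosure X T.obj₂
  | cone {T : Triangle C} : T ∈ (distTriang C) → thickClosure X T.obj₁ → thickClosure X T.obj₂ →
      thickClosure X T.obj₃
  | cocone {T : Triangle C} : T ∈ (distTriang C) → thickClosure X T.obj₂ → thickClosure X T.obj₃ →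
      thickClosure X T.obj₁
  | summand {A E : C} : thickClosure X E → IsDirectSummand A E → thickClosure X A

/-- A presilting subcategory. -/
def IsPresilting (M : Set C) : Prop :=
  SummandClosed M ∧
    ∀ ⦃A B : C⦄, A ∈ M → B ∈ M → ∀ k : ℤ, 1 ≤ k → ∀ f : A ⟶ B⟦k⟧, f = 0

/-- A silting subcategory. -/
def IsSilting (M : Set C) : Prop := IsPresilting M ∧ ∀ A : C, thickClosure M A

/-- A co-t-structure `(U, V)` is bounded if `⋃ₙ ΣⁿU = D = ⋃ₙ ΣⁿV`. -/
def BoundedPair (U V : Set C) : Prop :=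
  (⋃ n : ℤ, shiftSet n U) = (Set.univ : Set C) ∧ (⋃ n : ℤ, shiftSet n V) = (Set.univ : Set C)

/-! For `X ∈ V` with `Σ⁻ⁿ⁻¹X ∈ U`, the co-t-structure triangle `A → Σ⁻ⁿ⁻¹X → B → ΣA` has
`B ∈ U ∩ V`, since `U` is closed under extensions; shifting it by `n + 1` presents `X` as an
extension of `Σⁿ⁺¹B ∈ Σⁿ⁺¹M` by an object of `V ∩ ΣⁿU`, so by induction `X ∈ M ∗ ΣM ∗ ⋯ ∗ Σⁿ⁺¹M`.
Dually for `U`. Boundedness provides such an `n` for every object, whence `V = M^∧` and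
`U = M^∨`; as `M^∨` lies in the thick closure of `M` and every object is a shift of one in `U`,
`M` generates `D`. The vanishing `Hom(U, ΣᵏV) = 0` for `k ≥ 1` comes from `ΣV ⊆ V`, which holds
because `V` is exactly the right orthogonal `{X | Hom(U, ΣX) = 0}`. -/

open ZeroObject

set_option linter.unusedSectionVars false

lemma IsBiprodDecomp.symm {A B E : C} (h : IsBiprodDecomp A B E) : IsBiprodDecomp B A E := by
  obtain ⟨i, j, p, q, hip, hjq, hiq, hjp, hsum⟩ := h
  exact ⟨j, i, q, p, hjq, hip, hjp, hiq, by rw [add_comm, hsum]⟩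

lemma isBiprodDecomp_of_iso_biprod {A B E : C} (e : E ≅ A ⊞ B) : IsBiprodDecomp A B E :=
  ⟨biprod.inl ≫ e.inv, biprod.inr ≫ e.inv, e.hom ≫ biprod.fst, e.hom ≫ biprod.snd,
    by simp, by simp, by simp, by simp, by
      rw [Category.assoc, Category.assoc, ← Preadditive.comp_add, ← Category.assoc biprod.fst,
        ← Category.assoc biprod.snd, ← Preadditive.add_comp, biprod.total, Category.id_comp,
        Iso.hom_inv_id]⟩

lemma isDirectSummand_of_iso {A E : C} (e : A ≅ E) : IsDirectSummand A E :=
  ⟨0, e.hom, 0, e.inv, 0, by simp, (isZero_zero C).eq_of_src _ _, by simp, by simp, by simp⟩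

lemma isDirectSummand_zero (E : C) : IsDirectSummand (0 : C) E :=
  ⟨E, 0, 𝟙 E, 0, 𝟙 E, (isZero_zero C).eq_of_src _ _, by simp, by simp, by simp, by simp⟩

namespace SummandClosed

variable {S : Set C}

lemma mem_of_iso (hS : SummandClosed S) {A B : C} (e : A ≅ B) (hB : B ∈ S) : A ∈ S :=
  hS hB (isDirectSummand_of_iso e)

lemma shift_shift_mem_iff (hS : SummandClosed S) (X : C) {a b c : ℤ} (h : a + b = c) :
    X⟦a⟧⟦b⟧ ∈ S ↔ X⟦c⟧ ∈ S :=
  ⟨hS.mem_of_iso ((shiftFunctorAdd' C a b c h).app X),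
    hS.mem_of_iso ((shiftFunctorAdd' C a b c h).app X).symm⟩

lemma shift_mem_iff_of_eq_zero (hS : SummandClosed S) (X : C) {a : ℤ} (h : a = 0) :
    X⟦a⟧ ∈ S ↔ X ∈ S :=
  ⟨hS.mem_of_iso ((shiftFunctorZero' C a h).app X).symm,
    hS.mem_of_iso ((shiftFunctorZero' C a h).app X)⟩

lemma shift_shift_mem_iff_of_add_eq_zero (hS : SummandClosed S) (X : C) {a b : ℤ}
    (h : a + b = 0) : X⟦a⟧⟦b⟧ ∈ S ↔ X ∈ S :=
  ⟨hS.mem_of_iso ((shiftFunctorCompIsoId C a b h).app X).symm,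
    hS.mem_of_iso ((shiftFunctorCompIsoId C a b h).app X)⟩

lemma shiftSet_subset (hS : SummandClosed S) {X : Set C} {n : ℤ} (hX : ∀ A ∈ X, A⟦n⟧ ∈ S) :
    shiftSet n X ⊆ S :=
  fun _ ⟨A, hA, ⟨e⟩⟩ => hS.mem_of_iso e (hX A hA)

lemma mem_shiftSet_iff (hS : SummandClosed S) (X : C) (n : ℤ) :
    X ∈ shiftSet n S ↔ X⟦-n⟧ ∈ S := by
  constructor
  · rintro ⟨B, hB, ⟨e⟩⟩
    exact hS.mem_of_iso ((shiftFunctor C (-n)).mapIso e ≪≫ (shiftShiftNeg B n)) hB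
  · exact fun hX => ⟨X⟦-n⟧, hX, ⟨(shiftNegShift X n).symm⟩⟩

end SummandClosed

lemma isBiprodDecomp_of_distTriang_of_mor₃_eq_zero {T : Triangle C} (hT : T ∈ distTriang C)
    (h : T.mor₃ = 0) : IsBiprodDecomp T.obj₁ T.obj₃ T.obj₂ :=
  isBiprodDecomp_of_iso_biprod (exists_iso_binaryBiproduct_of_distTriang T hT h).choose

lemma mem_starSet_of_iso {X Y : Set C} {T : Triangle C} (hT : T ∈ distTriang C) {E : C}
    (e : T.obj₂ ≅ E) (h₁ : T.obj₁ ∈ X) (h₃ : T.obj₃ ∈ Y) : E ∈ starSet X Y :=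
  ⟨T.obj₁, T.obj₃, h₁, h₃, T.mor₁ ≫ e.hom, e.inv ≫ T.mor₂, T.mor₃,
    isomorphic_distinguished _ hT _
      (Triangle.isoMk _ _ (Iso.refl _) e.symm (Iso.refl _) (by dsimp only [Triangle.mk]; simp)
        (by dsimp only [Triangle.mk]; simp) (by dsimp only [Triangle.mk]; simp))⟩

lemma ExtClosed.starSet_subset {S X Y : Set C} (hS : ExtClosed S) (hX : X ⊆ S) (hY : Y ⊆ S) :
    starSet X Y ⊆ S :=
  fun _ ⟨_, _, hA, hB, _, _, _, hT⟩ => hS hT (hX hA) (hY hB)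

namespace IsCoTStructure

variable {U V : Set C}

lemma exists_distTriang (h : IsCoTStructure U V) (Y : C) :
    ∃ (A B : C) (f : A ⟶ Y) (g : Y ⟶ B) (k : B ⟶ A⟦(1 : ℤ)⟧),
      Triangle.mk f g k ∈ distTriang C ∧ A⟦(1 : ℤ)⟧ ∈ U ∧ B ∈ V := by
  obtain ⟨A, B, hA, hB, f, g, k, hT⟩ := h.cover Y
  exact ⟨A, B, f, g, k, hT, by simpa using (h.summand_U.mem_shiftSet_iff A (-1)).1 hA, hB⟩

lemma shift_mem_U_of_nonpos (h : IsCoTStructure U V) {X : C} {m : ℤ} (hm : m ≤ 0)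
    (hX : X ∈ U) : X⟦m⟧ ∈ U := by
  obtain ⟨n, rfl⟩ := Int.exists_eq_neg_ofNat hm
  induction n with
  | zero => exact (h.summand_U.shift_mem_iff_of_eq_zero X (by simp)).2 hX
  | succ n ih =>
    have : X⟦-(n : ℤ)⟧⟦(-1 : ℤ)⟧ ∈ U := h.shift_le ⟨_, ih (by omega), ⟨Iso.refl _⟩⟩
    exact (h.summand_U.shift_shift_mem_iff X (by push_cast; ring)).1 this

lemma mem_V_iff (h : IsCoTStructure U V) {X : C} :
    X ∈ V ↔ ∀ ⦃A : C⦄, A ∈ U → ∀ f : A ⟶ X⟦(1 : ℤ)⟧, f = 0 := by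
  refine ⟨fun hX A hA f => h.hom_zero hA hX f, fun hX => ?_⟩
  obtain ⟨A, B, f, _, _, hT, hA, hB⟩ := h.exists_distTriang X
  have hf : f = 0 :=
    (shiftFunctor C (1 : ℤ)).map_injective ((hX hA _).trans (Functor.map_zero _ _ _).symm)
  have hsplit := isBiprodDecomp_of_distTriang_of_mor₃_eq_zero (rot_of_distTriang _ hT)
    (show -(f⟦(1 : ℤ)⟧') = 0 by rw [hf, Functor.map_zero, neg_zero])
  exact h.summand_V hB ⟨_, hsplit⟩

lemma mem_U_iff (h : IsCoTStructure U V) {X : C} :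
    X ∈ U ↔ ∀ ⦃B : C⦄, B ∈ V → ∀ f : X ⟶ B⟦(1 : ℤ)⟧, f = 0 := by
  refine ⟨fun hX B hB f => h.hom_zero hX hB f, fun hX => ?_⟩
  obtain ⟨A, B, _, g, _, hT, hA, hB⟩ := h.exists_distTriang (X⟦(-1 : ℤ)⟧)
  have hg : g⟦(1 : ℤ)⟧' = 0 := by
    rw [← cancel_epi (shiftNegShift X (1 : ℤ)).inv, comp_zero]
    exact hX hB _
  have hsplit := isBiprodDecomp_of_distTriang_of_mor₃_eq_zero
    (rot_of_distTriang _ (rot_of_distTriang _ hT)) (show -(g⟦(1 : ℤ)⟧') = 0 by rw [hg, neg_zero])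
  exact h.summand_U.mem_of_iso (shiftNegShift X (1 : ℤ)).symm (h.summand_U hA ⟨_, hsplit.symm⟩)

lemma shift_one_mem_V (h : IsCoTStructure U V) {X : C} (hX : X ∈ V) : X⟦(1 : ℤ)⟧ ∈ V := by
  refine h.mem_V_iff.2 fun A hA f => (shiftFunctor C (-1 : ℤ)).map_injective ?_
  rw [Functor.map_zero, ← cancel_mono (shiftShiftNeg (X⟦(1 : ℤ)⟧) (1 : ℤ)).hom, zero_comp]
  exact h.hom_zero (h.shift_mem_U_of_nonpos (by norm_num) hA) hX _

lemma shift_mem_V_of_nonneg (h : IsCoTStructure U V) {X : C} {m : ℤ} (hm : 0 ≤ m)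
    (hX : X ∈ V) : X⟦m⟧ ∈ V := by
  induction m, hm using Int.leInduction with
  | base => exact (h.summand_V.shift_mem_iff_of_eq_zero X rfl).2 hX
  | succ n _ ih => exact (h.summand_V.shift_shift_mem_iff X rfl).1 (h.shift_one_mem_V ih)

lemma extClosed_U (h : IsCoTStructure U V) : ExtClosed U := fun T hT h₁ h₃ =>
  h.mem_U_iff.2 fun B hB f => by
    obtain ⟨g, rfl⟩ := Triangle.yoneda_exact₂ T hT f (h.hom_zero h₁ hB _)
    rw [h.hom_zero h₃ hB g, comp_zero]

lemma extClosed_V (h : IsCoTStructure U V) : ExtClosed V := fun T hT h₁ h₃ =>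
  h.mem_V_iff.2 fun A hA f => by
    obtain ⟨g, rfl⟩ := Triangle.coyoneda_exact₂ _ (Triangle.shift_distinguished T hT 1) f
      (h.hom_zero hA h₃ _)
    rw [h.hom_zero hA h₁ g]
    exact zero_comp

lemma hom_shift_eq_zero (h : IsCoTStructure U V) {A B : C} (hA : A ∈ U) (hB : B ∈ V) {k : ℤ}
    (hk : 1 ≤ k) (f : A ⟶ B⟦k⟧) : f = 0 := by
  rw [← cancel_mono ((shiftFunctorAdd' C (k - 1) 1 k (by ring)).app B).hom, zero_comp]
  exact h.hom_zero hA (h.shift_mem_V_of_nonneg (by omega) hB) _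

lemma isPresilting_inter (h : IsCoTStructure U V) : IsPresilting (U ∩ V) :=
  ⟨fun _ _ hE hs => ⟨h.summand_U hE.1 hs, h.summand_V hE.2 hs⟩,
    fun _ _ hA hB _ hk f => h.hom_shift_eq_zero hA.1 hB.2 hk f⟩

lemma mem_hatN (h : IsCoTStructure U V) (n : ℕ) {X : C} (hXV : X ∈ V)
    (hXU : X⟦-(n : ℤ)⟧ ∈ U) : X ∈ hatN (U ∩ V) n := by
  induction n generalizing X with
  | zero => exact ⟨(h.summand_U.shift_mem_iff_of_eq_zero X (by simp)).1 hXU, hXV⟩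
  | succ n ih =>
    push_cast at hXU
    obtain ⟨A, B, _, _, _, hT, hA, hB⟩ := h.exists_distTriang (X⟦-((n : ℤ) + 1)⟧)
    have hBM : B ∈ U ∩ V := ⟨h.extClosed_U (rot_of_distTriang _ hT) hXU hA, hB⟩
    have hT' := Triangle.shift_distinguished _ hT ((n : ℤ) + 1)
    have hAV : A⟦(n : ℤ) + 1⟧ ∈ V := h.extClosed_V (inv_rot_of_distTriang _ hT')
      ((h.summand_V.shift_shift_mem_iff B (by ring)).2 (h.shift_mem_V_of_nonneg (by positivity) hB))
      ((h.summand_V.shift_shift_mem_iff_of_add_eq_zero X (by ring)).2 hXV)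
    have hAU : A⟦(n : ℤ) + 1⟧⟦-(n : ℤ)⟧ ∈ U := (h.summand_U.shift_shift_mem_iff A (by ring)).2 hA
    exact mem_starSet_of_iso hT' ((shiftFunctorCompIsoId C _ _ (by ring)).app X) (ih hAV hAU)
      ⟨B, hBM, ⟨Iso.refl _⟩⟩

lemma mem_veeN (h : IsCoTStructure U V) (n : ℕ) {X : C} (hXU : X ∈ U)
    (hXV : X⟦(n : ℤ)⟧ ∈ V) : X ∈ veeN (U ∩ V) n := by
  induction n generalizing X with
  | zero => exact ⟨hXU, (h.summand_V.shift_mem_iff_of_eq_zero X (by simp)).1 hXV⟩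
  | succ n ih =>
    push_cast at hXV
    obtain ⟨A, B, _, _, _, hT, hA, hB⟩ := h.exists_distTriang (X⟦(n : ℤ)⟧)
    have hAM : A⟦(1 : ℤ)⟧ ∈ U ∩ V := ⟨hA, h.extClosed_V
      (rot_of_distTriang _ (rot_of_distTriang _ hT)) hB
      ((h.summand_V.shift_shift_mem_iff X rfl).2 hXV)⟩
    have hT' := Triangle.shift_distinguished _ hT (-(n : ℤ))
    have hBU : B⟦-(n : ℤ)⟧ ∈ U := h.extClosed_U (rot_of_distTriang _ hT')
      ((h.summand_U.shift_shift_mem_iff_of_add_eq_zero X (by ring)).2 hXU)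
      (h.summand_U.mem_of_iso ((shiftFunctorComm C (-(n : ℤ)) 1).app A)
        (h.shift_mem_U_of_nonpos (by omega) hA))
    have hBV : B⟦-(n : ℤ)⟧⟦(n : ℤ)⟧ ∈ V :=
      (h.summand_V.shift_shift_mem_iff_of_add_eq_zero B (by ring)).2 hB
    exact mem_starSet_of_iso hT' ((shiftFunctorCompIsoId C _ _ (by ring)).app X)
      ⟨A⟦(1 : ℤ)⟧, hAM, ⟨(shiftFunctorAdd' C 1 (-((n : ℤ) + 1)) _ (by ring)).app A⟩⟩ (ih hBU hBV)

lemma hatN_subset (h : IsCoTStructure U V) (n : ℕ) : hatN (U ∩ V) n ⊆ V := by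
  induction n with
  | zero => exact Set.inter_subset_right
  | succ n ih =>
    exact h.extClosed_V.starSet_subset ih (h.summand_V.shiftSet_subset fun _ hM =>
      h.shift_mem_V_of_nonneg (by positivity) hM.2)

lemma veeN_subset (h : IsCoTStructure U V) (n : ℕ) : veeN (U ∩ V) n ⊆ U := by
  induction n with
  | zero => exact Set.inter_subset_left
  | succ n ih =>
    exact h.extClosed_U.starSet_subset (h.summand_U.shiftSet_subset fun _ hM =>
      h.shift_mem_U_of_nonpos (by omega) hM.1) ih

lemma exists_shift_neg_mem_U (h : IsCoTStructure U V) (hb : BoundedPair U V) (X : C) :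
    ∃ n : ℕ, X⟦-(n : ℤ)⟧ ∈ U := by
  obtain ⟨m, hm⟩ := Set.mem_iUnion.1 (hb.1.symm ▸ Set.mem_univ X)
  refine ⟨m.toNat, (h.summand_U.shift_shift_mem_iff X (by ring)).1
    (h.shift_mem_U_of_nonpos (m := m - m.toNat) (by omega)
      ((h.summand_U.mem_shiftSet_iff X m).1 hm))⟩

lemma exists_shift_mem_V (h : IsCoTStructure U V) (hb : BoundedPair U V) (X : C) :
    ∃ n : ℕ, X⟦(n : ℤ)⟧ ∈ V := by
  obtain ⟨m, hm⟩ := Set.mem_iUnion.1 (hb.2.symm ▸ Set.mem_univ X)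
  refine ⟨(-m).toNat, (h.summand_V.shift_shift_mem_iff X (by ring)).1
    (h.shift_mem_V_of_nonneg (m := (-m).toNat + m) (by omega)
      ((h.summand_V.mem_shiftSet_iff X m).1 hm))⟩

lemma eq_hatSet (h : IsCoTStructure U V) (hb : BoundedPair U V) : V = hatSet (U ∩ V) :=
  Set.Subset.antisymm
    (fun X hX => Set.mem_iUnion.2 (by
      obtain ⟨n, hn⟩ := h.exists_shift_neg_mem_U hb X
      exact ⟨n, h.mem_hatN n hX hn⟩))
    (Set.iUnion_subset h.hatN_subset)

lemma eq_veeSet (h : IsCoTStructure U V) (hb : BoundedPair U V) : U = veeSet (U ∩ V) :=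
  Set.Subset.antisymm
    (fun X hX => Set.mem_iUnion.2 (by
      obtain ⟨n, hn⟩ := h.exists_shift_mem_V hb X
      exact ⟨n, h.mem_veeN n hX hn⟩))
    (Set.iUnion_subset h.veeN_subset)

end IsCoTStructure

namespace thickClosure

variable {M : Set C}

lemma of_iso {A E : C} (hE : thickClosure M E) (e : A ≅ E) : thickClosure M A :=
  hE.summand (isDirectSummand_of_iso e)

lemma zero {X : C} (hX : thickClosure M X) : thickClosure M 0 :=
  hX.summand (isDirectSummand_zero X)

lemma shift {X : C} (hX : thickClosure M X) (n : ℤ) : thickClosure M (X⟦n⟧) := by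
  induction n using Int.induction_on with
  | zero => exact hX.of_iso ((shiftFunctorZero C ℤ).app X)
  | succ n ih =>
    exact (cone (contractible_distinguished₂ _) ih ih.zero).of_iso
      ((shiftFunctorAdd' C (n : ℤ) 1 _ rfl).app X)
  | pred n ih =>
    exact cocone (contractible_distinguished₂ _) ih.zero
      (ih.of_iso ((shiftFunctorAdd' C (-(n : ℤ) - 1) 1 _ (by ring)).app X).symm)

lemma of_mem_veeN (n : ℕ) {X : C} (hX : X ∈ veeN M n) : thickClosure M X := by
  induction n generalizing X with
  | zero => exact of hX
  | succ n ih =>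
    obtain ⟨A, B, ⟨A₀, hA₀, ⟨e⟩⟩, hB, _, _, _, hT⟩ := hX
    exact ext hT (((of hA₀).shift _).of_iso e) (ih hB)

end thickClosure

lemma IsCoTStructure.isSilting_inter {U V : Set C} (h : IsCoTStructure U V)
    (hb : BoundedPair U V) : IsSilting (U ∩ V) := by
  refine ⟨h.isPresilting_inter, fun A => ?_⟩
  obtain ⟨m, X, hX, ⟨e⟩⟩ := Set.mem_iUnion.1 (hb.1.symm ▸ Set.mem_univ A)
  obtain ⟨n, hn⟩ := Set.mem_iUnion.1 (h.eq_veeSet hb ▸ hX)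
  exact ((thickClosure.of_mem_veeN n hn).shift m).of_iso e

/-- Theorem: if `(U,V)` is a bounded co-t-structure on `D`, then `M := U ∩ V` is a silting
subcategory of `D`, and `U = M^∨` and `V = M^∧`. -/
theorem stmt5 {U V : Set C} (h : IsCoTStructure U V) (hb : BoundedPair U V) :
    IsSilting (U ∩ V) ∧ U = veeSet (U ∩ V) ∧ V = hatSet (U ∩ V) :=
  ⟨h.isSilting_inter hb, h.eq_veeSet hb, h.eq_hatSet hb⟩
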